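/- arXiv:2302.05190 — 3 statements merged into one kernel-verified Lean document; each statement's English description precedes it below -/
import Mathlib

section
/- Suppose 1_C is a terminal object of C, M : C → Modᵒᵖ is a functor into the opposite of a category Mod with an initial object, and M(1_C) is initial in Mod. Let E be the pullback of a functor V : Sect → DispMod along a lift M• of M, where objects of E over Γ are pairs (Γ, s) with s a section of M•(Γ), and morphisms over f : Γ → Δ are those f whose images commute with the sections. Then (1_C, s₀), where s₀ is the section obtained from initiality of M(1_C), is a terminal object of E, and the projection π₀ : E → C strictly preserves the terminal object. -/
open CategoryTheory Limits

universe u v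

variable {C : Type u} [Category.{v} C] {Mod : Type u} [Category.{v} Mod]
  {DispMod : Type u} [Category.{v} DispMod]

/-- The category of sections: objects are pairs `(Γ, s)` where `s` is a section of
the displayed model `M•(Γ)` (a morphism from the base `U (M• Γ)` to the total
`T (M• Γ)` splitting the display map `π`). -/
structure SectObj (T U : DispMod ⥤ Mod) (π : T ⟶ U) (M : C ⥤ DispModᵒᵖ) where
  pt : C
  s : U.obj ((M.obj pt).unop) ⟶ T.obj ((M.obj pt).unop)
  hs : s ≫ π.app ((M.obj pt).unop) = 𝟙 _

/-- Morphisms of the category of sections over `f : Γ ⟶ Δ` are those `f` whose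
images commute with the sections. -/
instance (T U : DispMod ⥤ Mod) (π : T ⟶ U) (M : C ⥤ DispModᵒᵖ) :
    Category (SectObj T U π M) where
  Hom X Y := {f : X.pt ⟶ Y.pt //
    U.map ((M.map f).unop) ≫ X.s = Y.s ≫ T.map ((M.map f).unop)}
  id X := ⟨𝟙 _, by simp⟩
  comp f g := ⟨f.1 ≫ g.1, by
    have hf := f.2
    have hg := g.2
    simp only [Functor.map_comp, unop_comp, Category.assoc]
    rw [hf, ← Category.assoc, hg, Category.assoc]⟩
  id_comp f := Subtype.ext (by simp)
  comp_id f := Subtype.ext (by simp)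
  assoc f g h := Subtype.ext (by simp)

/-- The projection `π₀` from the category of sections to the base category. -/
def sectProj (T U : DispMod ⥤ Mod) (π : T ⟶ U) (M : C ⥤ DispModᵒᵖ) :
    SectObj T U π M ⥤ C where
  obj X := X.pt
  map f := f.1

/-- Suppose `C` has a terminal object `1_C`, `Mod` has an initial
object, `M• : C ⥤ DispModᵒᵖ` is a (lift of a) functor into displayed models whose
underlying model at the terminal object, `M(1_C) = U (M• 1_C)`, is initial in `Mod`.
Then `(1_C, s₀)` — for the section `s₀` of `M•(1_C)` obtained from initiality — is a
terminal object of the category of sections `E`, and the projection `π₀ : E ⥤ C`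
strictly preserves the terminal object. -/
theorem section_category_terminal
    [HasTerminal C] [HasInitial Mod]
    (T U : DispMod ⥤ Mod) (π : T ⟶ U) (M : C ⥤ DispModᵒᵖ)
    (hinit : IsInitial (U.obj ((M.obj (⊤_ C)).unop)))
    (s₀ : U.obj ((M.obj (⊤_ C)).unop) ⟶ T.obj ((M.obj (⊤_ C)).unop))
    (hs₀ : s₀ ≫ π.app ((M.obj (⊤_ C)).unop) = 𝟙 _) :
    Nonempty (IsTerminal (⟨⊤_ C, s₀, hs₀⟩ : SectObj T U π M)) ∧
    (sectProj T U π M).obj ⟨⊤_ C, s₀, hs₀⟩ = ⊤_ C := by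
  refine ⟨⟨IsTerminal.ofUniqueHom
    (fun X => ⟨terminal.from X.pt, hinit.hom_ext _ _⟩)
    (fun X m => Subtype.ext (terminal.hom_ext _ _))⟩, rfl⟩
end

section
/- Let C be a contextual CwF and A a closed type of C. Then the contextual slice C // (1.A), whose objects are telescopes over the extended context 1.A, is the free extension of C by a generic element q_A of type A: for every CwF E, CwF morphism F : C → E, and element a ∈ E.Tm(1_E, F(A)), there is a unique CwF morphism F̃ : C // (1.A) → E such that F̃ ∘ p_A* = F and F̃(q_A) = a. -/
universe u

/-- A category with families (CwF): a category with a terminal object, presheaves of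
types and terms, and context extension satisfying its universal property. -/
structure CwF where
  Ctx : Type (u + 1)
  Hom : Ctx → Ctx → Type u
  idh : ∀ Γ, Hom Γ Γ
  comp : ∀ {Γ Δ Θ : Ctx}, Hom Δ Θ → Hom Γ Δ → Hom Γ Θ
  comp_id : ∀ {Γ Δ} (f : Hom Γ Δ), comp f (idh Γ) = f
  id_comp : ∀ {Γ Δ} (f : Hom Γ Δ), comp (idh Δ) f = f
  assoc : ∀ {Γ Δ Θ Ξ} (h : Hom Θ Ξ) (g : Hom Δ Θ) (f : Hom Γ Δ),
    comp (comp h g) f = comp h (comp g f)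
  one : Ctx
  bang : ∀ Γ, Hom Γ one
  bang_uniq : ∀ {Γ} (f : Hom Γ one), f = bang Γ
  Ty : Ctx → Type u
  subT : ∀ {Γ Δ}, Ty Γ → Hom Δ Γ → Ty Δ
  subT_id : ∀ {Γ} (A : Ty Γ), subT A (idh Γ) = A
  subT_comp : ∀ {Γ Δ Θ} (A : Ty Γ) (f : Hom Δ Γ) (g : Hom Θ Δ),
    subT A (comp f g) = subT (subT A f) g
  Tm : ∀ Γ, Ty Γ → Type u
  subt : ∀ {Γ Δ} {A : Ty Γ}, Tm Γ A → (f : Hom Δ Γ) → Tm Δ (subT A f)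
  subt_id : ∀ {Γ} {A : Ty Γ} (a : Tm Γ A), HEq (subt a (idh Γ)) a
  subt_comp : ∀ {Γ Δ Θ} {A : Ty Γ} (a : Tm Γ A) (f : Hom Δ Γ) (g : Hom Θ Δ),
    HEq (subt a (comp f g)) (subt (subt a f) g)
  ext : ∀ Γ, Ty Γ → Ctx
  pp : ∀ {Γ} {A : Ty Γ}, Hom (ext Γ A) Γ
  qq : ∀ {Γ} {A : Ty Γ}, Tm (ext Γ A) (subT A pp)
  pair : ∀ {Γ Δ} {A : Ty Γ} (f : Hom Δ Γ), Tm Δ (subT A f) → Hom Δ (ext Γ A)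
  pp_pair : ∀ {Γ Δ} {A : Ty Γ} (f : Hom Δ Γ) (a : Tm Δ (subT A f)),
    comp pp (pair f a) = f
  qq_pair : ∀ {Γ Δ} {A : Ty Γ} (f : Hom Δ Γ) (a : Tm Δ (subT A f)),
    HEq (subt qq (pair f a)) a
  pair_uniq : ∀ {Γ Δ} {A : Ty Γ} (h : Hom Δ (ext Γ A)),
    h = pair (comp pp h)
      (cast (congrArg (Tm Δ) (subT_comp A pp h).symm) (subt qq h))

/-- A morphism of CwFs: a functor strictly preserving the terminal object, types,
terms, substitution and context extensions. -/
structure CwFHom (M N : CwF.{u}) where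
  ctx : M.Ctx → N.Ctx
  hom : ∀ {Γ Δ}, M.Hom Γ Δ → N.Hom (ctx Γ) (ctx Δ)
  hom_id : ∀ Γ, hom (M.idh Γ) = N.idh (ctx Γ)
  hom_comp : ∀ {Γ Δ Θ} (g : M.Hom Δ Θ) (f : M.Hom Γ Δ),
    hom (M.comp g f) = N.comp (hom g) (hom f)
  ctx_one : ctx M.one = N.one
  ty : ∀ {Γ}, M.Ty Γ → N.Ty (ctx Γ)
  ty_sub : ∀ {Γ Δ} (A : M.Ty Γ) (f : M.Hom Δ Γ),
    ty (M.subT A f) = N.subT (ty A) (hom f)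
  tm : ∀ {Γ} {A : M.Ty Γ}, M.Tm Γ A → N.Tm (ctx Γ) (ty A)
  tm_sub : ∀ {Γ Δ} {A : M.Ty Γ} (a : M.Tm Γ A) (f : M.Hom Δ Γ),
    HEq (tm (M.subt a f)) (N.subt (tm a) (hom f))
  ctx_ext : ∀ {Γ} (A : M.Ty Γ), ctx (M.ext Γ A) = N.ext (ctx Γ) (ty A)
  hom_p : ∀ {Γ} (A : M.Ty Γ), HEq (hom (M.pp (A := A))) (N.pp (A := ty A))
  tm_q : ∀ {Γ} (A : M.Ty Γ), HEq (tm (M.qq (A := A))) (N.qq (A := ty A))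

/-- Telescopes (iterated context extensions) over a context `Γ₀`, indexed by the
context they realize. -/
inductive TeleOver (M : CwF.{u}) (Γ₀ : M.Ctx) : M.Ctx → Type (u + 1)
  | nil : TeleOver M Γ₀ Γ₀
  | snoc {Δ} (t : TeleOver M Γ₀ Δ) (A : M.Ty Δ) : TeleOver M Γ₀ (M.ext Δ A)

/-- A CwF is contextual if every context is uniquely an iterated context extension
of the empty context. -/
def Contextual (M : CwF.{u}) : Prop :=
  Function.Bijective (fun p : Σ Γ : M.Ctx, TeleOver M M.one Γ => p.1)

/-- The projection of a telescope to its base, a composite of the projections `p`. -/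
def teleProj (M : CwF.{u}) {Γ₀ : M.Ctx} : ∀ {Δ}, TeleOver M Γ₀ Δ → M.Hom Δ Γ₀
  | _, .nil => M.idh Γ₀
  | _, .snoc t _ => M.comp (teleProj M t) M.pp

/-- The contextual slice `M // Γ₀`: its contexts are the telescopes over `Γ₀`, its
morphisms are the morphisms between their realizations lying over `Γ₀`, and the rest
of the structure is inherited from `M`. -/
def sliceCwF (M : CwF.{u}) (Γ₀ : M.Ctx) : CwF.{u} where
  Ctx := Σ Δ : M.Ctx, TeleOver M Γ₀ Δ
  Hom X Y := {f : M.Hom X.1 Y.1 // M.comp (teleProj M Y.2) f = teleProj M X.2}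
  idh X := ⟨M.idh X.1, M.comp_id _⟩
  comp g f := ⟨M.comp g.1 f.1, by rw [← M.assoc, g.2, f.2]⟩
  comp_id f := Subtype.ext (M.comp_id f.1)
  id_comp f := Subtype.ext (M.id_comp f.1)
  assoc h g f := Subtype.ext (M.assoc h.1 g.1 f.1)
  one := ⟨Γ₀, TeleOver.nil⟩
  bang X := ⟨teleProj M X.2, M.id_comp _⟩
  bang_uniq f := Subtype.ext ((M.id_comp f.1).symm.trans f.2)
  Ty X := M.Ty X.1
  subT A f := M.subT A f.1
  subT_id A := M.subT_id A
  subT_comp A f g := M.subT_comp A f.1 g.1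
  Tm X A := M.Tm X.1 A
  subt a f := M.subt a f.1
  subt_id a := M.subt_id a
  subt_comp a f g := M.subt_comp a f.1 g.1
  ext X A := ⟨M.ext X.1 A, X.2.snoc A⟩
  pp := ⟨M.pp, rfl⟩
  qq := M.qq
  pair f a := ⟨M.pair f.1 a, by
    show M.comp (M.comp _ M.pp) _ = _
    rw [M.assoc, M.pp_pair, f.2]⟩
  pp_pair f a := Subtype.ext (M.pp_pair f.1 a)
  qq_pair f a := M.qq_pair f.1 a
  pair_uniq h := Subtype.ext (M.pair_uniq h.1)

/-!
A telescope `Δ` over `1.A` is interpreted in `E` as the fiber of `F Δ → F (1.A)` over the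
point `z : 1 → F (1.A)` that corresponds to `a`; the fiber is built one context extension at
a time. Contextuality turns `Γ ↦ 1.A × Γ` into a CwF morphism `p_A*`, and the fiber of
`F (1.A × Γ)` over `z` is `F Γ` itself, so `F̃ ∘ p_A* = F`. Conversely, if `G ∘ p_A* = F`,
then `G` applied to the map `X → 1.A × X` gives a map `G X → F X`; `G(q_A) = a` forces it to
be `z` on the empty telescope, and induction along the telescope identifies it with the fiber
inclusion, whence `G = F̃`.
-/

namespace CwF

variable {N : CwF.{u}}

def eqToHom {X Y : N.Ctx} (h : X = Y) : N.Hom X Y := h ▸ N.idh X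

@[simp] theorem eqToHom_refl (X : N.Ctx) : eqToHom (rfl : X = X) = N.idh X := rfl

theorem eqToHom_comp_eq_comp_eqToHom_iff {X X' Y Y' : N.Ctx} (hX : X = X') (hY : Y = Y')
    {u : N.Hom X Y} {v : N.Hom X' Y'} :
    N.comp (eqToHom hY) u = N.comp v (eqToHom hX) ↔ HEq u v := by
  subst hX hY; rw [eqToHom_refl, eqToHom_refl, N.id_comp, N.comp_id, heq_iff_eq]

theorem hom_eq_of_eq_one {Z Y : N.Ctx} (h : Y = N.one) (f g : N.Hom Z Y) : f = g := by
  subst h; exact (N.bang_uniq f).trans (N.bang_uniq g).symm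

theorem ext_congr {X X' : N.Ctx} (hX : X = X') {A : N.Ty X} {A' : N.Ty X'}
    (hA : HEq A A') : N.ext X A = N.ext X' A' := by
  subst hX; cases eq_of_heq hA; rfl

theorem pp_congr {X X' : N.Ctx} (hX : X = X') {A : N.Ty X} {A' : N.Ty X'}
    (hA : HEq A A') : HEq (N.pp (A := A)) (N.pp (A := A')) := by
  subst hX; cases eq_of_heq hA; rfl

theorem qq_congr {X X' : N.Ctx} (hX : X = X') {A : N.Ty X} {A' : N.Ty X'}
    (hA : HEq A A') : HEq (N.qq (A := A)) (N.qq (A := A')) := by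
  subst hX; cases eq_of_heq hA; rfl

theorem subt_congr {Γ Γ' Δ : N.Ctx} (hΓ : Γ = Γ') {A : N.Ty Γ} {A' : N.Ty Γ'}
    (hA : HEq A A') {a : N.Tm Γ A} {a' : N.Tm Γ' A'} (ha : HEq a a')
    {f : N.Hom Δ Γ} {f' : N.Hom Δ Γ'} (hf : HEq f f') :
    HEq (N.subt a f) (N.subt a' f') := by
  subst hΓ; cases eq_of_heq hA; cases eq_of_heq ha; cases eq_of_heq hf; rfl

theorem subT_eqToHom_heq {X Y : N.Ctx} (h : X = Y) (A : N.Ty Y) :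
    HEq (N.subT A (eqToHom h)) A := by
  subst h; rw [eqToHom_refl, N.subT_id]

theorem subt_eqToHom_heq {X Y : N.Ctx} (h : X = Y) {A : N.Ty Y} (a : N.Tm Y A) :
    HEq (N.subt a (eqToHom h)) a := by
  subst h; exact N.subt_id a

theorem subT_eqToHom_symm {X Y : N.Ctx} (h : X = Y) (A : N.Ty X) :
    N.subT A (eqToHom h.symm) = cast (congrArg N.Ty h) A := by
  subst h; exact N.subT_id A

theorem subT_eqToHom_comp {X Y Y' : N.Ctx} (h : Y = Y') {A : N.Ty Y} {A' : N.Ty Y'}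
    (hA : HEq A A') (g : N.Hom X Y) :
    N.subT A g = N.subT A' (N.comp (eqToHom h) g) := by
  subst h; cases eq_of_heq hA; rw [eqToHom_refl, N.id_comp]

theorem subt_eqToHom_comp_heq {X Y Y' : N.Ctx} (h : Y = Y') {A : N.Ty Y} {A' : N.Ty Y'}
    (hA : HEq A A') {a : N.Tm Y A} {a' : N.Tm Y' A'} (ha : HEq a a') (g : N.Hom X Y) :
    HEq (N.subt a g) (N.subt a' (N.comp (eqToHom h) g)) := by
  subst h; cases eq_of_heq hA; cases eq_of_heq ha; rw [eqToHom_refl, N.id_comp]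

theorem subt_comp_eqToHom_heq {X X' Y : N.Ctx} (h : X' = X) (g : N.Hom X Y)
    {A : N.Ty Y} (a : N.Tm Y A) : HEq (N.subt a (N.comp g (eqToHom h))) (N.subt a g) := by
  subst h; rw [eqToHom_refl, N.comp_id]

theorem pair_congr {Γ Δ : N.Ctx} {A : N.Ty Γ} {f g : N.Hom Δ Γ} (hfg : f = g)
    {a : N.Tm Δ (N.subT A f)} {b : N.Tm Δ (N.subT A g)} (hab : HEq a b) :
    N.pair f a = N.pair g b := by
  subst hfg; cases eq_of_heq hab; rfl

theorem hom_ext {Γ Δ : N.Ctx} {A : N.Ty Γ} {f g : N.Hom Δ (N.ext Γ A)}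
    (hp : N.comp N.pp f = N.comp N.pp g) (hq : HEq (N.subt N.qq f) (N.subt N.qq g)) :
    f = g := by
  rw [N.pair_uniq f, N.pair_uniq g]
  exact pair_congr hp (((cast_heq _ _).trans hq).trans (cast_heq _ _).symm)

theorem hom_ext_of_heq {Γ Δ C : N.Ctx} {A : N.Ty Γ} (hC : C = N.ext Γ A)
    {p : N.Hom C Γ} (hp : HEq p (N.pp (A := A))) {A' : N.Ty C}
    (hA' : A' = N.subT A p) {q : N.Tm C A'} (hq : HEq q (N.qq (A := A)))
    {f g : N.Hom Δ C} (h₁ : N.comp p f = N.comp p g)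
    (h₂ : HEq (N.subt q f) (N.subt q g)) : f = g := by
  subst hC hA'; cases eq_of_heq hp; cases eq_of_heq hq; exact hom_ext h₁ h₂

theorem exists_pair_of_heq {Γ Δ C : N.Ctx} {A : N.Ty Γ} (hC : C = N.ext Γ A)
    {p : N.Hom C Γ} (hp : HEq p (N.pp (A := A))) {A' : N.Ty C}
    (hA' : A' = N.subT A p) {q : N.Tm C A'} (hq : HEq q (N.qq (A := A)))
    (g : N.Hom Δ Γ) (b : N.Tm Δ (N.subT A g)) :
    ∃ f : N.Hom Δ C, N.comp p f = g ∧ HEq (N.subt q f) b := by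
  subst hC hA'; cases eq_of_heq hp; cases eq_of_heq hq
  exact ⟨N.pair g b, N.pp_pair g b, N.qq_pair g b⟩

end CwF

namespace CwFHom

variable {M E : CwF.{u}}

theorem tm_congr (F : CwFHom M E) {Γ : M.Ctx} {A A' : M.Ty Γ} (h : A = A')
    {a : M.Tm Γ A} {a' : M.Tm Γ A'} (ha : HEq a a') : HEq (F.tm a) (F.tm a') := by
  subst h; cases eq_of_heq ha; rfl

theorem ext {G H : CwFHom M E}
    (hctx : ∀ Γ, G.ctx Γ = H.ctx Γ)
    (hhom : ∀ (Γ Δ : M.Ctx) (f : M.Hom Γ Δ), HEq (G.hom f) (H.hom f))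
    (hty : ∀ (Γ : M.Ctx) (B : M.Ty Γ), HEq (G.ty B) (H.ty B))
    (htm : ∀ (Γ : M.Ctx) (B : M.Ty Γ) (b : M.Tm Γ B), HEq (G.tm b) (H.tm b)) :
    G = H := by
  obtain ⟨Gctx, Ghom, _, _, _, Gty, _, Gtm, _, _, _, _⟩ := G
  obtain ⟨Hctx, Hhom, _, _, _, Hty, _, Htm, _, _, _, _⟩ := H
  obtain rfl : Gctx = Hctx := funext hctx
  obtain rfl : @Ghom = @Hhom := by funext Γ Δ f; exact eq_of_heq (hhom Γ Δ f)
  obtain rfl : @Gty = @Hty := by funext Γ B; exact eq_of_heq (hty Γ B)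
  obtain rfl : @Gtm = @Htm := by funext Γ B b; exact eq_of_heq (htm Γ B b)
  rfl

/-- `G ∘ W = F`, componentwise. -/
structure CompEq {N : CwF.{u}} (G : CwFHom N E) (W : CwFHom M N) (F : CwFHom M E) : Prop where
  ctx : ∀ Γ, G.ctx (W.ctx Γ) = F.ctx Γ
  hom : ∀ (Γ Δ : M.Ctx) (f : M.Hom Γ Δ), HEq (G.hom (W.hom f)) (F.hom f)
  ty : ∀ (Γ : M.Ctx) (B : M.Ty Γ), HEq (G.ty (W.ty B)) (F.ty B)
  tm : ∀ (Γ : M.Ctx) (B : M.Ty Γ) (b : M.Tm Γ B), HEq (G.tm (W.tm b)) (F.tm b)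

variable (F : CwFHom M E)

theorem hom_ext {Δ : M.Ctx} {B : M.Ty Δ} {Z : E.Ctx} {f g : E.Hom Z (F.ctx (M.ext Δ B))}
    (hp : E.comp (F.hom (M.pp (A := B))) f = E.comp (F.hom (M.pp (A := B))) g)
    (hq : HEq (E.subt (F.tm (M.qq (A := B))) f) (E.subt (F.tm (M.qq (A := B))) g)) :
    f = g :=
  CwF.hom_ext_of_heq (F.ctx_ext B) (F.hom_p B) (F.ty_sub B M.pp) (F.tm_q B) hp hq

theorem exists_pair {Δ : M.Ctx} (B : M.Ty Δ) {Z : E.Ctx} (g : E.Hom Z (F.ctx Δ))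
    (b : E.Tm Z (E.subT (F.ty B) g)) :
    ∃ f : E.Hom Z (F.ctx (M.ext Δ B)),
      E.comp (F.hom (M.pp (A := B))) f = g ∧ HEq (E.subt (F.tm (M.qq (A := B))) f) b :=
  CwF.exists_pair_of_heq (F.ctx_ext B) (F.hom_p B) (F.ty_sub B M.pp) (F.tm_q B) g b

theorem exists_point (A : M.Ty M.one)
    (a : E.Tm E.one (cast (congrArg E.Ty F.ctx_one) (F.ty A))) :
    ∃ z : E.Hom E.one (F.ctx (M.ext M.one A)), HEq (E.subt (F.tm (M.qq (A := A))) z) a := by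
  obtain ⟨z, -, hz⟩ := F.exists_pair A (CwF.eqToHom F.ctx_one.symm)
    (cast (congrArg (E.Tm E.one) (CwF.subT_eqToHom_symm F.ctx_one (F.ty A)).symm) a)
  exact ⟨z, hz.trans (cast_heq _ _)⟩

end CwFHom

section Weakening

variable {M : CwF.{u}}

/-- `weaken Γ₀ T` presents the product `Γ₀ × Γ` as a telescope over `Γ₀`, with `proj` its
second projection and `teleProj` its first one. -/
structure Weakening (M : CwF.{u}) (Γ₀ Γ : M.Ctx) where
  car : M.Ctx
  tele : TeleOver M Γ₀ car
  proj : M.Hom car Γ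

@[reducible] def weaken (Γ₀ : M.Ctx) : ∀ {Γ}, TeleOver M M.one Γ → Weakening M Γ₀ Γ
  | _, .nil => ⟨Γ₀, .nil, M.bang Γ₀⟩
  | _, .snoc T B =>
    let w := weaken Γ₀ T
    ⟨M.ext w.car (M.subT B w.proj), w.tele.snoc _,
      M.pair (M.comp w.proj M.pp)
        (cast (congrArg (M.Tm _) (M.subT_comp B w.proj M.pp).symm) M.qq)⟩

variable {Γ₀ : M.Ctx}

theorem pp_comp_weaken_snoc_proj {Γ : M.Ctx} (T : TeleOver M M.one Γ) (B : M.Ty Γ) :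
    M.comp M.pp (weaken Γ₀ (T.snoc B)).proj = M.comp (weaken Γ₀ T).proj M.pp :=
  M.pp_pair _ _

theorem subT_weaken_snoc_proj {Γ : M.Ctx} (T : TeleOver M M.one Γ) (B : M.Ty Γ) :
    M.subT (M.subT B M.pp) (weaken Γ₀ (T.snoc B)).proj
      = M.subT (M.subT B (weaken Γ₀ T).proj) M.pp := by
  rw [← M.subT_comp, ← M.subT_comp, pp_comp_weaken_snoc_proj]

theorem subt_qq_weaken_snoc_proj {Γ : M.Ctx} (T : TeleOver M M.one Γ) (B : M.Ty Γ) :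
    HEq (M.subt M.qq (weaken Γ₀ (T.snoc B)).proj) (M.qq (A := M.subT B (weaken Γ₀ T).proj)) :=
  (M.qq_pair _ _).trans (cast_heq _ _)

theorem subt_qq_weaken_snoc_proj_comp {Γ Z : M.Ctx} (T : TeleOver M M.one Γ) (B : M.Ty Γ)
    (f : M.Hom Z (weaken Γ₀ (T.snoc B)).car) :
    HEq (M.subt M.qq (M.comp (weaken Γ₀ (T.snoc B)).proj f)) (M.subt M.qq f) :=
  (M.subt_comp _ _ _).trans (CwF.subt_congr rfl (heq_of_eq (subT_weaken_snoc_proj T B))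
    (subt_qq_weaken_snoc_proj T B) HEq.rfl)

theorem weaken_hom_ext {Γ Z : M.Ctx} (T : TeleOver M M.one Γ)
    {f g : M.Hom Z (weaken Γ₀ T).car}
    (hproj : M.comp (weaken Γ₀ T).proj f = M.comp (weaken Γ₀ T).proj g)
    (htele : M.comp (teleProj M (weaken Γ₀ T).tele) f
      = M.comp (teleProj M (weaken Γ₀ T).tele) g) : f = g := by
  induction T with
  | nil => exact (M.id_comp f).symm.trans (htele.trans (M.id_comp g))
  | snoc T B ih =>
    refine M.hom_ext (ih ?_ ?_) ?_
    · rw [← M.assoc, ← M.assoc, ← pp_comp_weaken_snoc_proj, M.assoc, M.assoc, hproj]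
    · rw [← M.assoc, ← M.assoc]; exact htele
    · exact (subt_qq_weaken_snoc_proj_comp T B f).symm.trans
        (hproj ▸ subt_qq_weaken_snoc_proj_comp T B g)

theorem exists_weaken_lift {Γ Z : M.Ctx} (T : TeleOver M M.one Γ) (g : M.Hom Z Γ)
    (h : M.Hom Z Γ₀) :
    ∃ l : M.Hom Z (weaken Γ₀ T).car,
      M.comp (weaken Γ₀ T).proj l = g ∧ M.comp (teleProj M (weaken Γ₀ T).tele) l = h := by
  induction T with
  | nil => exact ⟨h, CwF.hom_eq_of_eq_one rfl _ _, M.id_comp h⟩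
  | snoc T B ih =>
    obtain ⟨l, hlp, hlt⟩ := ih (M.comp M.pp g)
    have e : M.subT (M.subT B M.pp) g = M.subT (M.subT B (weaken Γ₀ T).proj) l := by
      rw [← M.subT_comp, ← M.subT_comp, hlp]
    refine ⟨M.pair l (cast (congrArg (M.Tm Z) e) (M.subt M.qq g)), M.hom_ext ?_ ?_, ?_⟩
    · rw [← M.assoc, pp_comp_weaken_snoc_proj, M.assoc, M.pp_pair, hlp]
    · exact (subt_qq_weaken_snoc_proj_comp T B _).trans
        ((M.qq_pair _ _).trans (cast_heq _ _))
    · show M.comp (M.comp (teleProj M (weaken Γ₀ T).tele) M.pp) _ = h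
      rw [M.assoc, M.pp_pair, hlt]

noncomputable def weakenLift {Γ Z : M.Ctx} (T : TeleOver M M.one Γ) (g : M.Hom Z Γ)
    (h : M.Hom Z Γ₀) : M.Hom Z (weaken Γ₀ T).car :=
  (exists_weaken_lift T g h).choose

theorem weakenLift_proj {Γ Z : M.Ctx} (T : TeleOver M M.one Γ) (g : M.Hom Z Γ)
    (h : M.Hom Z Γ₀) : M.comp (weaken Γ₀ T).proj (weakenLift T g h) = g :=
  (exists_weaken_lift T g h).choose_spec.1

theorem weakenLift_tele {Γ Z : M.Ctx} (T : TeleOver M M.one Γ) (g : M.Hom Z Γ)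
    (h : M.Hom Z Γ₀) : M.comp (teleProj M (weaken Γ₀ T).tele) (weakenLift T g h) = h :=
  (exists_weaken_lift T g h).choose_spec.2

theorem eq_weakenLift {Γ Z : M.Ctx} (T : TeleOver M M.one Γ) {g : M.Hom Z Γ}
    {h : M.Hom Z Γ₀} (l : M.Hom Z (weaken Γ₀ T).car) (hg : M.comp (weaken Γ₀ T).proj l = g)
    (hh : M.comp (teleProj M (weaken Γ₀ T).tele) l = h) : l = weakenLift T g h :=
  weaken_hom_ext T (hg.trans (weakenLift_proj T g h).symm)
    (hh.trans (weakenLift_tele T g h).symm)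

end Weakening

section Contextual

variable {M : CwF.{u}} (hM : Contextual M)

noncomputable def teleOf (Γ : M.Ctx) : TeleOver M M.one Γ :=
  (hM.2 Γ).choose_spec ▸ (hM.2 Γ).choose.2

theorem eq_teleOf {Γ : M.Ctx} (T : TeleOver M M.one Γ) : T = teleOf hM Γ :=
  eq_of_heq (Sigma.ext_iff.mp (hM.1 (a₁ := ⟨Γ, T⟩) (a₂ := ⟨Γ, teleOf hM Γ⟩) rfl)).2

theorem teleOf_one : teleOf hM M.one = .nil := (eq_teleOf hM _).symm

theorem teleOf_ext (Γ : M.Ctx) (B : M.Ty Γ) : teleOf hM (M.ext Γ B) = (teleOf hM Γ).snoc B :=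
  (eq_teleOf hM _).symm

/-- The weakening morphism `p_Γ₀* : M → M // Γ₀`, sending `Γ` to `Γ₀ × Γ` and `f` to
`Γ₀ × f`. -/
@[reducible] noncomputable def weakening (Γ₀ : M.Ctx) : CwFHom M (sliceCwF M Γ₀) where
  ctx Γ := ⟨(weaken Γ₀ (teleOf hM Γ)).car, (weaken Γ₀ (teleOf hM Γ)).tele⟩
  hom {Γ Δ} f :=
    ⟨weakenLift (teleOf hM Δ) (M.comp f (weaken Γ₀ (teleOf hM Γ)).proj)
        (teleProj M (weaken Γ₀ (teleOf hM Γ)).tele), weakenLift_tele _ _ _⟩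
  hom_id Γ := by
    refine Subtype.ext (eq_weakenLift _ (M.idh _) ?_ ?_).symm
    · rw [M.comp_id, M.id_comp]
    · rw [M.comp_id]
  hom_comp {Γ Δ Θ} g f := by
    refine Subtype.ext (eq_weakenLift _ _ ?_ ?_).symm
    · show M.comp (weaken Γ₀ (teleOf hM Θ)).proj (M.comp _ _) = _
      rw [← M.assoc, weakenLift_proj, M.assoc, weakenLift_proj, ← M.assoc]
    · show M.comp (teleProj M (weaken Γ₀ (teleOf hM Θ)).tele) (M.comp _ _) = _
      rw [← M.assoc, weakenLift_tele, weakenLift_tele]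
  ctx_one := by
    show (⟨_, (weaken Γ₀ (teleOf hM M.one)).tele⟩ : (sliceCwF M Γ₀).Ctx) = _
    rw [teleOf_one hM]; rfl
  ty {Γ} B := M.subT B (weaken Γ₀ (teleOf hM Γ)).proj
  ty_sub {Γ Δ} B f := by
    show M.subT (M.subT B f) _ = M.subT (M.subT B _) _
    rw [← M.subT_comp, ← M.subT_comp, weakenLift_proj]
  tm {Γ} {B} b := M.subt b (weaken Γ₀ (teleOf hM Γ)).proj
  tm_sub {Γ Δ} {B} b f := by
    show HEq (M.subt (M.subt b f) _) (M.subt (M.subt b _) _)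
    refine ((M.subt_comp b f _).symm.trans ?_).trans (M.subt_comp b _ _)
    exact CwF.subt_congr rfl HEq.rfl HEq.rfl (heq_of_eq (weakenLift_proj _ _ _).symm)
  ctx_ext {Γ} B := by
    show (⟨_, (weaken Γ₀ (teleOf hM (M.ext Γ B))).tele⟩ : (sliceCwF M Γ₀).Ctx) = _
    rw [teleOf_ext hM Γ B]; rfl
  hom_p {Γ} B := by
    have := teleOf_ext hM Γ B
    generalize teleOf hM (M.ext Γ B) = T at this ⊢
    subst this
    exact heq_of_eq (Subtype.ext (eq_weakenLift _ M.pp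
      (pp_comp_weaken_snoc_proj _ B).symm rfl).symm)
  tm_q {Γ} B := by
    have := teleOf_ext hM Γ B
    generalize teleOf hM (M.ext Γ B) = T at this ⊢
    subst this
    exact subt_qq_weaken_snoc_proj _ B

end Contextual

namespace CwFHom

variable {M E : CwF.{u}} (F : CwFHom M E) {Γ₀ : M.Ctx} (a : E.Hom E.one (F.ctx Γ₀))

/-- The fiber of `F (teleProj M t) : F Δ → F Γ₀` over the point `a`, built one context
extension at a time, together with its inclusion into `F Δ`. -/
@[reducible] noncomputable def fiberData :
    ∀ {Δ}, TeleOver M Γ₀ Δ → Σ' C : E.Ctx, E.Hom C (F.ctx Δ)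
  | _, .nil => ⟨E.one, a⟩
  | _, .snoc t B =>
    let w := fiberData t
    ⟨E.ext w.1 (E.subT (F.ty B) w.2),
      (F.exists_pair B (E.comp w.2 E.pp)
        (cast (congrArg (E.Tm _) (E.subT_comp (F.ty B) w.2 E.pp).symm) E.qq)).choose⟩

noncomputable abbrev fiber {Δ : M.Ctx} (t : TeleOver M Γ₀ Δ) : E.Ctx := (F.fiberData a t).1

noncomputable abbrev fiberIncl {Δ : M.Ctx} (t : TeleOver M Γ₀ Δ) :
    E.Hom (F.fiber a t) (F.ctx Δ) :=
  (F.fiberData a t).2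

variable {Δ : M.Ctx}

theorem hom_pp_comp_fiberIncl (t : TeleOver M Γ₀ Δ) (B : M.Ty Δ) :
    E.comp (F.hom (M.pp (A := B))) (F.fiberIncl a (t.snoc B)) = E.comp (F.fiberIncl a t) E.pp :=
  (F.exists_pair B _ _).choose_spec.1

theorem subt_tm_qq_fiberIncl (t : TeleOver M Γ₀ Δ) (B : M.Ty Δ) :
    HEq (E.subt (F.tm (M.qq (A := B))) (F.fiberIncl a (t.snoc B)))
      (E.qq (A := E.subT (F.ty B) (F.fiberIncl a t))) :=
  (F.exists_pair B _ _).choose_spec.2.trans (cast_heq _ _)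

theorem subt_tm_qq_fiberIncl_comp (t : TeleOver M Γ₀ Δ) (B : M.Ty Δ) {Z : E.Ctx}
    (f : E.Hom Z (F.fiber a (t.snoc B))) :
    HEq (E.subt (F.tm (M.qq (A := B))) (E.comp (F.fiberIncl a (t.snoc B)) f))
      (E.subt (E.qq (A := E.subT (F.ty B) (F.fiberIncl a t))) f) := by
  have hty : E.subT (F.ty (M.subT B M.pp)) (F.fiberIncl a (t.snoc B))
      = E.subT (E.subT (F.ty B) (F.fiberIncl a t)) E.pp := by
    rw [F.ty_sub, ← E.subT_comp, hom_pp_comp_fiberIncl, E.subT_comp]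
  exact (E.subt_comp _ _ _).trans
    (CwF.subt_congr rfl (heq_of_eq hty) (F.subt_tm_qq_fiberIncl a t B) HEq.rfl)

theorem hom_teleProj_comp_fiberIncl (t : TeleOver M Γ₀ Δ) :
    E.comp (F.hom (teleProj M t)) (F.fiberIncl a t) = E.comp a (E.bang _) := by
  induction t with
  | nil =>
    show E.comp (F.hom (M.idh Γ₀)) a = E.comp a (E.bang E.one)
    rw [F.hom_id, E.id_comp, ← E.bang_uniq (E.idh E.one), E.comp_id]
  | snoc t B ih =>
    show E.comp (F.hom (M.comp (teleProj M t) M.pp)) _ = _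
    rw [F.hom_comp, E.assoc, hom_pp_comp_fiberIncl, ← E.assoc, ih, E.assoc]
    exact congrArg (E.comp a) (E.bang_uniq _)

theorem fiberIncl_mono (t : TeleOver M Γ₀ Δ) {Z : E.Ctx} {f g : E.Hom Z (F.fiber a t)}
    (h : E.comp (F.fiberIncl a t) f = E.comp (F.fiberIncl a t) g) : f = g := by
  induction t with
  | nil => exact CwF.hom_eq_of_eq_one rfl f g
  | snoc t B ih =>
    refine E.hom_ext (ih ?_) ?_
    · rw [← E.assoc, ← hom_pp_comp_fiberIncl, E.assoc, h, ← E.assoc, hom_pp_comp_fiberIncl,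
        E.assoc]
    · exact (F.subt_tm_qq_fiberIncl_comp a t B f).symm.trans
        (h ▸ F.subt_tm_qq_fiberIncl_comp a t B g)

theorem exists_fiberIncl_comp_eq (t : TeleOver M Γ₀ Δ) {Z : E.Ctx} (g : E.Hom Z (F.ctx Δ))
    (hg : E.comp (F.hom (teleProj M t)) g = E.comp a (E.bang Z)) :
    ∃ l : E.Hom Z (F.fiber a t), E.comp (F.fiberIncl a t) l = g := by
  induction t with
  | nil =>
    refine ⟨E.bang Z, ?_⟩
    have : E.comp (F.hom (M.idh Γ₀)) g = E.comp a (E.bang Z) := hg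
    rw [F.hom_id, E.id_comp] at this
    exact this.symm
  | snoc t B ih =>
    obtain ⟨l, hl⟩ := ih (E.comp (F.hom (M.pp (A := B))) g) <| by
      rw [← E.assoc, ← F.hom_comp]; exact hg
    have e : E.subT (F.ty (M.subT B M.pp)) g = E.subT (E.subT (F.ty B) (F.fiberIncl a t)) l := by
      rw [F.ty_sub, ← E.subT_comp, ← hl, E.subT_comp]
    refine ⟨E.pair l (cast (congrArg (E.Tm Z) e) (E.subt (F.tm (M.qq (A := B))) g)),
      F.hom_ext ?_ ?_⟩
    · rw [← E.assoc, hom_pp_comp_fiberIncl, E.assoc, E.pp_pair, hl]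
    · exact (F.subt_tm_qq_fiberIncl_comp a t B _).trans ((E.qq_pair _ _).trans (cast_heq _ _))

theorem hom_teleProj_comp_hom_comp_fiberIncl {X Y : (sliceCwF M Γ₀).Ctx}
    (f : (sliceCwF M Γ₀).Hom X Y) :
    E.comp (F.hom (teleProj M Y.2)) (E.comp (F.hom f.1) (F.fiberIncl a X.2))
      = E.comp a (E.bang _) := by
  rw [← E.assoc, ← F.hom_comp, f.2, hom_teleProj_comp_fiberIncl]

noncomputable def sliceExtendHom {X Y : (sliceCwF M Γ₀).Ctx} (f : (sliceCwF M Γ₀).Hom X Y) :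
    E.Hom (F.fiber a X.2) (F.fiber a Y.2) :=
  (F.exists_fiberIncl_comp_eq a Y.2 _ (F.hom_teleProj_comp_hom_comp_fiberIncl a f)).choose

theorem fiberIncl_comp_sliceExtendHom {X Y : (sliceCwF M Γ₀).Ctx}
    (f : (sliceCwF M Γ₀).Hom X Y) :
    E.comp (F.fiberIncl a Y.2) (F.sliceExtendHom a f) = E.comp (F.hom f.1) (F.fiberIncl a X.2) :=
  (F.exists_fiberIncl_comp_eq a Y.2 _ (F.hom_teleProj_comp_hom_comp_fiberIncl a f)).choose_spec

/-- The extension `F̃ : M // Γ₀ → E` of `F` sending the generic point of `Γ₀` to `a`. -/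
@[reducible] noncomputable def sliceExtend : CwFHom (sliceCwF M Γ₀) E where
  ctx X := F.fiber a X.2
  hom f := F.sliceExtendHom a f
  hom_id X := by
    apply F.fiberIncl_mono a X.2
    rw [fiberIncl_comp_sliceExtendHom, E.comp_id]
    show E.comp (F.hom (M.idh X.1)) _ = _
    rw [F.hom_id, E.id_comp]
  hom_comp {X Y Z} g f := by
    apply F.fiberIncl_mono a Z.2
    rw [fiberIncl_comp_sliceExtendHom, ← E.assoc, fiberIncl_comp_sliceExtendHom, E.assoc,
      fiberIncl_comp_sliceExtendHom, ← E.assoc, ← F.hom_comp]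
    rfl
  ctx_one := rfl
  ty {X} B := E.subT (F.ty B) (F.fiberIncl a X.2)
  ty_sub {X Y} B f := by
    show E.subT (F.ty (M.subT B f.1)) _ = _
    erw [F.ty_sub, ← E.subT_comp, ← fiberIncl_comp_sliceExtendHom, E.subT_comp]
  tm {X} {B} b := E.subt (F.tm b) (F.fiberIncl a X.2)
  tm_sub {X Y} {B} b f := by
    show HEq (E.subt (F.tm (M.subt b f.1)) (F.fiberIncl a Y.2))
      (E.subt (E.subt (F.tm b) (F.fiberIncl a X.2)) (F.sliceExtendHom a f))
    refine (CwF.subt_congr rfl (heq_of_eq (F.ty_sub B f.1)) (F.tm_sub b f.1) HEq.rfl).trans ?_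
    refine ((E.subt_comp _ _ _).symm.trans ?_).trans (E.subt_comp _ _ _)
    exact CwF.subt_congr rfl HEq.rfl HEq.rfl
      (heq_of_eq (F.fiberIncl_comp_sliceExtendHom a f).symm)
  ctx_ext {X} B := rfl
  hom_p {X} B := by
    refine heq_of_eq (F.fiberIncl_mono a X.2 ?_)
    rw [fiberIncl_comp_sliceExtendHom]
    exact F.hom_pp_comp_fiberIncl a X.2 B
  tm_q {X} B := F.subt_tm_qq_fiberIncl a X.2 B

/-- The fiber of `F (Γ₀ × Γ) → F Γ₀` over `a` is `F Γ`, via the second projection. -/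
theorem exists_hom_proj_comp_fiberIncl_weaken {Γ : M.Ctx} (T : TeleOver M M.one Γ) :
    ∃ h : F.fiber a (weaken Γ₀ T).tele = F.ctx Γ,
      E.comp (F.hom (weaken Γ₀ T).proj) (F.fiberIncl a (weaken Γ₀ T).tele)
        = CwF.eqToHom h := by
  induction T with
  | nil => exact ⟨F.ctx_one.symm, CwF.hom_eq_of_eq_one F.ctx_one _ _⟩
  | @snoc Γ T B ih =>
    obtain ⟨h, hincl⟩ := ih
    have hB : HEq (E.subT (F.ty (M.subT B (weaken Γ₀ T).proj))
        (F.fiberIncl a (weaken Γ₀ T).tele)) (F.ty B) := by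
      refine (heq_of_eq ?_).trans (CwF.subT_eqToHom_heq h (F.ty B))
      rw [F.ty_sub, ← E.subT_comp, hincl]
    have h' : F.fiber a (weaken Γ₀ (T.snoc B)).tele = F.ctx (M.ext Γ B) :=
      (CwF.ext_congr h hB).trans (F.ctx_ext B).symm
    refine ⟨h', F.hom_ext ?_ ?_⟩
    · rw [← E.assoc, ← F.hom_comp, pp_comp_weaken_snoc_proj, F.hom_comp, E.assoc,
        hom_pp_comp_fiberIncl, ← E.assoc, hincl]
      exact (CwF.eqToHom_comp_eq_comp_eqToHom_iff h' h).mpr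
        ((CwF.pp_congr h hB).trans (F.hom_p B).symm)
    · have hty : E.subT (F.ty (M.subT B M.pp)) (F.hom (weaken Γ₀ (T.snoc B)).proj)
          = F.ty (M.subT (M.subT B (weaken Γ₀ T).proj) M.pp) := by
        rw [← F.ty_sub, subT_weaken_snoc_proj]
      refine (E.subt_comp _ _ _).trans (HEq.trans ?_ (CwF.subt_eqToHom_heq h' _).symm)
      refine (CwF.subt_congr rfl (heq_of_eq hty) ((F.tm_sub _ _).symm.trans
        (F.tm_congr (subT_weaken_snoc_proj T B) (subt_qq_weaken_snoc_proj T B))) HEq.rfl).trans ?_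
      exact (F.subt_tm_qq_fiberIncl a _ _).trans ((CwF.qq_congr h hB).trans (F.tm_q B).symm)

theorem sliceExtend_compEq (hM : Contextual M) :
    (F.sliceExtend a).CompEq (weakening hM Γ₀) F := by
  have key := fun Γ => F.exists_hom_proj_comp_fiberIncl_weaken a (Γ₀ := Γ₀) (teleOf hM Γ)
  refine ⟨fun Γ => (key Γ).choose, fun Γ Δ f => ?_, fun Γ B => ?_, fun Γ B b => ?_⟩
  · obtain ⟨hΓ, hinclΓ⟩ := key Γ
    obtain ⟨hΔ, hinclΔ⟩ := key Δ
    let Wf := (weakening hM Γ₀).hom f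
    have hsq : E.comp (F.fiberIncl a (weaken Γ₀ (teleOf hM Δ)).tele) ((F.sliceExtend a).hom Wf)
        = E.comp (F.hom Wf.1) (F.fiberIncl a (weaken Γ₀ (teleOf hM Γ)).tele) :=
      F.fiberIncl_comp_sliceExtendHom a Wf
    have hproj : M.comp (weaken Γ₀ (teleOf hM Δ)).proj Wf.1
        = M.comp f (weaken Γ₀ (teleOf hM Γ)).proj :=
      weakenLift_proj _ _ _
    refine (CwF.eqToHom_comp_eq_comp_eqToHom_iff hΓ hΔ).mp ?_
    rw [← hinclΔ, E.assoc, hsq, ← E.assoc, ← F.hom_comp, hproj, F.hom_comp, E.assoc, hinclΓ]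
  · obtain ⟨hΓ, hinclΓ⟩ := key Γ
    show HEq (E.subT (F.ty (M.subT B (weaken Γ₀ (teleOf hM Γ)).proj))
      (F.fiberIncl a (weaken Γ₀ (teleOf hM Γ)).tele)) (F.ty B)
    refine (heq_of_eq ?_).trans (CwF.subT_eqToHom_heq hΓ (F.ty B))
    rw [F.ty_sub, ← E.subT_comp, hinclΓ]
  · obtain ⟨hΓ, hinclΓ⟩ := key Γ
    show HEq (E.subt (F.tm (M.subt b (weaken Γ₀ (teleOf hM Γ)).proj))
      (F.fiberIncl a (weaken Γ₀ (teleOf hM Γ)).tele)) (F.tm b)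
    refine (CwF.subt_congr rfl (heq_of_eq (F.ty_sub B _)) (F.tm_sub b _) HEq.rfl).trans ?_
    refine (E.subt_comp (F.tm b) _ _).symm.trans ?_
    rw [hinclΓ]
    exact CwF.subt_eqToHom_heq hΓ (F.tm b)

end CwFHom

section Uniqueness

variable {M E : CwF.{u}} (hM : Contextual M) {Γ₀ : M.Ctx}

noncomputable def toWeakening (X : (sliceCwF M Γ₀).Ctx) :
    (sliceCwF M Γ₀).Hom X ((weakening hM Γ₀).ctx X.1) :=
  ⟨weakenLift (teleOf hM X.1) (M.idh X.1) (teleProj M X.2), weakenLift_tele _ _ _⟩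

theorem weaken_proj_comp_toWeakening (X : (sliceCwF M Γ₀).Ctx) :
    M.comp (weaken Γ₀ (teleOf hM X.1)).proj (toWeakening hM X).1 = M.idh X.1 :=
  weakenLift_proj _ _ _

theorem toWeakening_comp {X Y : (sliceCwF M Γ₀).Ctx} (f : (sliceCwF M Γ₀).Hom X Y) :
    (sliceCwF M Γ₀).comp (toWeakening hM Y) f
      = (sliceCwF M Γ₀).comp ((weakening hM Γ₀).hom f.1) (toWeakening hM X) := by
  apply Subtype.ext
  show M.comp (toWeakening hM Y).1 f.1
    = M.comp ((weakening hM Γ₀).hom f.1).1 (toWeakening hM X).1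
  refine (eq_weakenLift (teleOf hM Y.1) (g := f.1) (h := teleProj M X.2) _ ?_ ?_).trans
    (eq_weakenLift (teleOf hM Y.1) _ ?_ ?_).symm
  · rw [← M.assoc, weaken_proj_comp_toWeakening, M.id_comp]
  · rw [← M.assoc, (toWeakening hM Y).2]; exact f.2
  · rw [← M.assoc, weakenLift_proj, M.assoc, weaken_proj_comp_toWeakening, M.comp_id]
  · rw [← M.assoc, ((weakening hM Γ₀).hom f.1).2, (toWeakening hM X).2]

theorem subT_weakening_ty_toWeakening (X : (sliceCwF M Γ₀).Ctx) (B : M.Ty X.1) :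
    (sliceCwF M Γ₀).subT ((weakening hM Γ₀).ty B) (toWeakening hM X) = B := by
  show M.subT (M.subT B (weaken Γ₀ (teleOf hM X.1)).proj) (toWeakening hM X).1 = B
  rw [← M.subT_comp, weaken_proj_comp_toWeakening, M.subT_id]

theorem subt_weakening_tm_toWeakening (X : (sliceCwF M Γ₀).Ctx) {B : M.Ty X.1}
    (b : M.Tm X.1 B) :
    HEq ((sliceCwF M Γ₀).subt ((weakening hM Γ₀).tm b) (toWeakening hM X)) b := by
  show HEq (M.subt (M.subt b (weaken Γ₀ (teleOf hM X.1)).proj) (toWeakening hM X).1) b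
  refine (M.subt_comp b _ _).symm.trans (HEq.trans ?_ (M.subt_id b))
  exact CwF.subt_congr rfl HEq.rfl HEq.rfl (heq_of_eq (weaken_proj_comp_toWeakening hM X))

namespace CwFHom.CompEq

variable {F : CwFHom M E} {G : CwFHom (sliceCwF M Γ₀) E} (hG : G.CompEq (weakening hM Γ₀) F)

/-- `G` applied to `X → Γ₀ × X.1`; its codomain is `F X.1` because `G ∘ p_Γ₀* = F`. -/
noncomputable def comparison (X : (sliceCwF M Γ₀).Ctx) : E.Hom (G.ctx X) (F.ctx X.1) :=
  E.comp (CwF.eqToHom (hG.ctx X.1)) (G.hom (toWeakening hM X))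

theorem ty_eq_subT_comparison (X : (sliceCwF M Γ₀).Ctx) (B : M.Ty X.1) :
    G.ty (Γ := X) B = E.subT (F.ty B) (hG.comparison hM X) := by
  rw [← congrArg (G.ty (Γ := X)) (subT_weakening_ty_toWeakening hM X B), G.ty_sub]
  exact CwF.subT_eqToHom_comp (hG.ctx X.1) (hG.ty X.1 B) _

theorem tm_heq_subt_comparison (X : (sliceCwF M Γ₀).Ctx) {B : M.Ty X.1} (b : M.Tm X.1 B) :
    HEq (G.tm (Γ := X) b) (E.subt (F.tm b) (hG.comparison hM X)) := by
  refine (G.tm_congr (subT_weakening_ty_toWeakening hM X B).symm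
    (subt_weakening_tm_toWeakening hM X b).symm).trans ?_
  exact (G.tm_sub _ _).trans
    (CwF.subt_eqToHom_comp_heq (hG.ctx X.1) (hG.ty X.1 B) (hG.tm X.1 B b) _)

theorem comparison_comp {X Y : (sliceCwF M Γ₀).Ctx} (f : (sliceCwF M Γ₀).Hom X Y) :
    E.comp (hG.comparison hM Y) (G.hom f) = E.comp (F.hom f.1) (hG.comparison hM X) := by
  rw [comparison, comparison, E.assoc, ← G.hom_comp, toWeakening_comp, G.hom_comp, ← E.assoc,
    (CwF.eqToHom_comp_eq_comp_eqToHom_iff (hG.ctx X.1) (hG.ctx Y.1)).mpr (hG.hom _ _ f.1),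
    E.assoc]

variable {a : E.Hom E.one (F.ctx Γ₀)}

theorem exists_comparison_eq_fiberIncl
    (ha : hG.comparison hM ⟨Γ₀, .nil⟩ = E.comp a (CwF.eqToHom G.ctx_one))
    (X : (sliceCwF M Γ₀).Ctx) :
    ∃ h : G.ctx X = F.fiber a X.2,
      hG.comparison hM X = E.comp (F.fiberIncl a X.2) (CwF.eqToHom h) := by
  obtain ⟨Δ, t⟩ := X
  induction t with
  | nil => exact ⟨G.ctx_one, ha⟩
  | @snoc Δ t B ih =>
    obtain ⟨h, hcmp⟩ := ih
    have hB : HEq (G.ty (Γ := ⟨Δ, t⟩) B) (E.subT (F.ty B) (F.fiberIncl a t)) := by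
      refine (heq_of_eq ?_).trans (CwF.subT_eqToHom_heq h _)
      exact (hG.ty_eq_subT_comparison hM ⟨Δ, t⟩ B).trans
        ((congrArg (E.subT (F.ty B)) hcmp).trans (E.subT_comp _ _ _))
    have h' : G.ctx ⟨M.ext Δ B, t.snoc B⟩ = F.fiber a (t.snoc B) :=
      (G.ctx_ext (Γ := ⟨Δ, t⟩) B).trans (CwF.ext_congr h hB)
    refine ⟨h', F.hom_ext ?_ ?_⟩
    · let p := (sliceCwF M Γ₀).pp (Γ := ⟨Δ, t⟩) (A := B)
      have hpp : E.comp (CwF.eqToHom h) (G.hom p) = E.comp E.pp (CwF.eqToHom h') :=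
        (CwF.eqToHom_comp_eq_comp_eqToHom_iff h' h).mpr
          ((G.hom_p (Γ := ⟨Δ, t⟩) B).trans (CwF.pp_congr h hB))
      have hnat := hG.comparison_comp hM p
      rw [hcmp, E.assoc, hpp] at hnat
      refine hnat.symm.trans ((E.assoc _ _ _).symm.trans ?_)
      exact (congrArg (E.comp · (CwF.eqToHom h')) (F.hom_pp_comp_fiberIncl a t B).symm).trans
        (E.assoc _ _ _)
    · refine (hG.tm_heq_subt_comparison hM ⟨M.ext Δ B, t.snoc B⟩ M.qq).symm.trans ?_
      refine HEq.trans ?_ (CwF.subt_comp_eqToHom_heq h' _ _).symm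
      exact (G.tm_q (Γ := ⟨Δ, t⟩) B).trans
        ((CwF.qq_congr h hB).trans (F.subt_tm_qq_fiberIncl a t B).symm)

theorem eq_sliceExtend
    (ha : hG.comparison hM ⟨Γ₀, .nil⟩ = E.comp a (CwF.eqToHom G.ctx_one)) :
    G = F.sliceExtend a := by
  have key := hG.exists_comparison_eq_fiberIncl hM ha
  refine CwFHom.ext (fun X => (key X).choose) (fun X Y f => ?_) (fun X B => ?_) (fun X B b => ?_)
  · obtain ⟨hX, hcX⟩ := key X
    obtain ⟨hY, hcY⟩ := key Y
    have hnat := hG.comparison_comp hM f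
    rw [hcX, hcY, E.assoc] at hnat
    refine (CwF.eqToHom_comp_eq_comp_eqToHom_iff hX hY).mp (F.fiberIncl_mono a Y.2 ?_)
    rw [hnat, ← E.assoc, ← E.assoc, fiberIncl_comp_sliceExtendHom]
  · obtain ⟨hX, hcX⟩ := key X
    refine (heq_of_eq ?_).trans (CwF.subT_eqToHom_heq hX _)
    exact (hG.ty_eq_subT_comparison hM X B).trans
      ((congrArg (E.subT (F.ty B)) hcX).trans (E.subT_comp _ _ _))
  · obtain ⟨hX, hcX⟩ := key X
    refine (hG.tm_heq_subt_comparison hM X b).trans ?_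
    rw [hcX]
    exact CwF.subt_comp_eqToHom_heq hX _ _

end CwFHom.CompEq

end Uniqueness

theorem CwFHom.CompEq.comparison_nil_eq {M E : CwF.{u}} (hM : Contextual M) {A : M.Ty M.one}
    {F : CwFHom M E} {G : CwFHom (sliceCwF M (M.ext M.one A)) E}
    (hG : G.CompEq (weakening hM (M.ext M.one A)) F) {z : E.Hom E.one (F.ctx (M.ext M.one A))}
    (hq : HEq (G.tm (Γ := ⟨M.ext M.one A, .nil⟩) (A := M.subT A M.pp) M.qq)
      (E.subt (F.tm (M.qq (A := A))) z)) :
    hG.comparison hM ⟨M.ext M.one A, .nil⟩ = E.comp z (CwF.eqToHom G.ctx_one) :=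
  F.hom_ext (CwF.hom_eq_of_eq_one F.ctx_one _ _)
    ((hG.tm_heq_subt_comparison hM ⟨M.ext M.one A, .nil⟩ (M.qq (A := A))).symm.trans
      (hq.trans (CwF.subt_comp_eqToHom_heq _ _ _).symm))

/-- Let `M` be a contextual CwF and `A` a closed type. Then the
contextual slice `M // (1.A)` is the free extension of `M` by a generic element
`q_A` of type `A`: there is a weakening morphism `p_A* : M → M // (1.A)` such that
for every CwF `E`, CwF morphism `F : M → E` and element `a ∈ E.Tm(1_E, F(A))`,
there is a unique CwF morphism `F̃ : M // (1.A) → E` with `F̃ ∘ p_A* = F` (stated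
componentwise) and `F̃(q_A) = a`. -/
theorem contextual_slice_free_extension (M : CwF.{u}) (hM : Contextual M)
    (A : M.Ty M.one) :
    ∃ W : CwFHom M (sliceCwF M (M.ext M.one A)),
      ∀ (E : CwF.{u}) (F : CwFHom M E) (a : E.Tm E.one (cast (congrArg E.Ty F.ctx_one) (F.ty A))),
        ∃! Ft : CwFHom (sliceCwF M (M.ext M.one A)) E,
          (∀ Γ, Ft.ctx (W.ctx Γ) = F.ctx Γ) ∧
          (∀ (Γ Δ : M.Ctx) (f : M.Hom Γ Δ), HEq (Ft.hom (W.hom f)) (F.hom f)) ∧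
          (∀ (Γ : M.Ctx) (B : M.Ty Γ), HEq (Ft.ty (W.ty B)) (F.ty B)) ∧
          (∀ (Γ : M.Ctx) (B : M.Ty Γ) (b : M.Tm Γ B), HEq (Ft.tm (W.tm b)) (F.tm b)) ∧
          HEq (Ft.tm (Γ := ⟨M.ext M.one A, TeleOver.nil⟩) (A := M.subT A M.pp)
            M.qq) a := by
  refine ⟨weakening hM _, fun E F a => ?_⟩
  obtain ⟨z, hz⟩ := F.exists_point A a
  have hW := F.sliceExtend_compEq z hM
  refine ⟨F.sliceExtend z, ⟨hW.ctx, hW.hom, hW.ty, hW.tm, hz⟩, ?_⟩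
  rintro G ⟨hctx, hhom, hty, htm, hq⟩
  have hG : G.CompEq (weakening hM _) F := ⟨hctx, hhom, hty, htm⟩
  exact hG.eq_sliceExtend hM (hG.comparison_nil_eq hM (hq.trans hz.symm))
end

section
/- In the normalization displayed model, the quote and unquote structure for Π-types is well-defined: given (A•_p, A•_u, A•_q) and a family of such triples B• over displayed terms of A•, the operations Π•_u(f^ne) = λ a•, B•_u(a•, app^ne(f^ne, A•_q(a•))) and Π•_q(f•) = lam^nf(λ x, B•_q(a•, f•(a•))) where a• = A•_u(var^ne x), produce respectively an element of the logical predicate Π•_p at any neutral f, and a normal form of f from an element of Π•_p(f), where Π•_p(f) = ∀ a a•, B•_p(a•, app(f, a)). -/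
universe u

/-- The closed syntax of the type theory with variables and `Π`-types, together with
the indexed families of neutrals and normal forms over closed terms, with their
constructors `var^ne`, `app^ne`, `lam^nf` (substitution of a variable `b[x]` is
encoded by application of the HOAS binder to `var x`), and the β-rule of the syntax. -/
structure NormSyntax where
  Ty : Type u
  Tm : Ty → Type u
  Var : Ty → Type u
  var : ∀ {A : Ty}, Var A → Tm A
  Pi : (A : Ty) → (Tm A → Ty) → Ty
  app : ∀ {A : Ty} {B : Tm A → Ty}, Tm (Pi A B) → (a : Tm A) → Tm (B a)
  lam : ∀ {A : Ty} {B : Tm A → Ty}, ((a : Tm A) → Tm (B a)) → Tm (Pi A B)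
  eta : ∀ {A : Ty} {B : Tm A → Ty} (f : Tm (Pi A B)), lam (fun a => app f a) = f
  Ne : ∀ (A : Ty), Tm A → Type u
  Nf : ∀ (A : Ty), Tm A → Type u
  varNe : ∀ {A : Ty} (x : Var A), Ne A (var x)
  appNe : ∀ {A : Ty} {B : Tm A → Ty} {f : Tm (Pi A B)} {a : Tm A},
    Ne (Pi A B) f → Nf A a → Ne (B a) (app f a)
  lamNf : ∀ {A : Ty} {B : Tm A → Ty} (b : (a : Tm A) → Tm (B a)),
    ((x : Var A) → Nf (B (var x)) (b (var x))) → Nf (Pi A B) (lam b)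

/-- A displayed type of the normalization model over a closed type `A`: a logical
predicate `P` over closed terms of type `A`, an unquoting function `u` sending
neutrals into the predicate, and a quoting function `q` sending elements of the
predicate to normal forms. -/
structure DTy (S : NormSyntax.{u}) (A : S.Ty) where
  P : S.Tm A → Type u
  u : ∀ {a : S.Tm A}, S.Ne A a → P a
  q : ∀ {a : S.Tm A}, P a → S.Nf A a

/-- The logical predicate of the normalization model at a `Π`-type:
`Π•_p(f) = ∀ a a•, B•_p(a•, app(f, a))`. -/
def PiP (S : NormSyntax.{u}) {A : S.Ty} {B : S.Tm A → S.Ty}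
    (AD : DTy S A) (BD : ∀ (a : S.Tm A), AD.P a → DTy S (B a))
    (f : S.Tm (S.Pi A B)) : Type u :=
  ∀ (a : S.Tm A) (aD : AD.P a), (BD a aD).P (S.app f a)

/-- In the normalization displayed model, the quote and unquote
structure for `Π`-types is well-defined: there is an unquoting operation sending
any neutral `f^ne` of type `Π(A,B)` to the element
`λ a•, B•_u(app^ne(f^ne, A•_q(a•)))` of the logical predicate `Π•_p`, and a quoting
operation sending any element `f•` of `Π•_p(f)` to a normal form of `f`, given (up
to the η-rule) by `lam^nf(λ x, B•_q(f•(a•)))` where `a• = A•_u(var^ne x)`. -/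
theorem normalization_pi_quote_unquote (S : NormSyntax.{u})
    {A : S.Ty} {B : S.Tm A → S.Ty}
    (AD : DTy S A) (BD : ∀ (a : S.Tm A), AD.P a → DTy S (B a)) :
    (∃ unq : ∀ (f : S.Tm (S.Pi A B)), S.Ne (S.Pi A B) f → PiP S AD BD f,
      ∀ f (fne : S.Ne (S.Pi A B) f) (a : S.Tm A) (aD : AD.P a),
        unq f fne a aD = (BD a aD).u (S.appNe fne (AD.q aD))) ∧
    (∃ quo : ∀ (f : S.Tm (S.Pi A B)), PiP S AD BD f → S.Nf (S.Pi A B) f,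
      ∀ f (fD : PiP S AD BD f),
        HEq (quo f fD)
          (S.lamNf (fun a => S.app f a) (fun x =>
            (BD (S.var x) (AD.u (S.varNe x))).q
              (fD (S.var x) (AD.u (S.varNe x)))))) := by
  refine ⟨⟨fun f fne a aD => (BD a aD).u (S.appNe fne (AD.q aD)),
    fun _ _ _ _ => rfl⟩,
    ⟨fun f fD => (S.eta f) ▸ S.lamNf (fun a => S.app f a) (fun x =>
      (BD (S.var x) (AD.u (S.varNe x))).q (fD (S.var x) (AD.u (S.varNe x)))), ?_⟩⟩
  intro f fD
  exact eqRec_heq _ _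
end
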